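/- arXiv:2303.16836 — 3 statements merged into one kernel-verified Lean document; each statement's English description precedes it below -/
import Mathlib

section
/- Let C be a category and α, β objects of C such that Hom(α,α) and Hom(β,β) are finite. If f : α → β and g : β → α are both epimorphisms, then f and g are isomorphisms (in particular α and β are isomorphic). -/
/-! Precomposition with the epimorphism `f ≫ g` is injective on the finite set `α ⟶ α`, hence
surjective, so `f ≫ g` has a retraction and is an isomorphism. Then `f` is a split mono as well as
an epi, hence an isomorphism, and so is `g = inv f ≫ (f ≫ g)`. -/

open CategoryTheory

namespace CategoryTheory

variable {C : Type*} [Category C]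

theorem isIso_of_epi_of_finite_endomorphisms {X : C} [Finite (X ⟶ X)] (e : X ⟶ X) [Epi e] :
    IsIso e := by
  have hinj : Function.Injective (e ≫ · : (X ⟶ X) → (X ⟶ X)) := fun _ _ ↦ (cancel_epi e).mp
  obtain ⟨r, hr⟩ := Finite.injective_iff_surjective.mp hinj (𝟙 X)
  have : IsSplitMono e := .mk' ⟨r, hr⟩
  exact isIso_of_epi_of_isSplitMono e

theorem isIso_of_epi_of_isIso_comp {X Y Z : C} (f : X ⟶ Y) (g : Y ⟶ Z) [Epi f]
    [IsIso (f ≫ g)] : IsIso f := by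
  have : IsSplitMono f := .mk' ⟨g ≫ inv (f ≫ g), by rw [← Category.assoc, IsIso.hom_inv_id]⟩
  exact isIso_of_epi_of_isSplitMono f

end CategoryTheory

theorem epi_pair_isIso_of_finite_general {C : Type*} [Category C] (α β : C)
    [Finite (α ⟶ α)]
    (f : α ⟶ β) (g : β ⟶ α) (hf : Epi f) (hg : Epi g) :
    IsIso f ∧ IsIso g ∧ Nonempty (α ≅ β) := by
  have : IsIso (f ≫ g) := isIso_of_epi_of_finite_endomorphisms (f ≫ g)
  have : IsIso f := isIso_of_epi_of_isIso_comp f g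
  have : IsIso g := IsIso.of_isIso_comp_left f g
  exact ⟨inferInstance, inferInstance, ⟨asIso f⟩⟩

/-- In any category, if `α` and `β` have finite endomorphism sets, and
`f : α ⟶ β` and `g : β ⟶ α` are both epimorphisms, then `f` and `g` are
isomorphisms; in particular `α ≅ β`. -/
theorem epi_pair_isIso_of_finite {C : Type*} [Category C] (α β : C)
    [Finite (α ⟶ α)] [Finite (β ⟶ β)]
    (f : α ⟶ β) (g : β ⟶ α) (hf : Epi f) (hg : Epi g) :
    IsIso f ∧ IsIso g ∧ Nonempty (α ≅ β) :=
  epi_pair_isIso_of_finite_general α β f g hf hg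
end

section
/- If V₁, V₂, V ∈ ext(G,D) with V₁ ⊆ V and V₂ ⊆ V, then V₁ ∩ V₂ ∈ ext(G,D). -/
namespace Paper

variable {ι Ed : Type*}

/-- The set of edges with one endpoint in `V` and the other in `W`
(a loop at `v` belongs to it iff `v ∈ V ∩ W`). -/
def edgesBetween (ends : Ed → Sym2 ι) (V W : Set ι) : Set Ed :=
  {e | ∃ a b, ends e = s(a, b) ∧ a ∈ V ∧ b ∈ W}

/-- A set of vertices is connected if it is nonempty and the induced multigraph
on it is connected. -/
def IsConnectedOn (ends : Ed → Sym2 ι) (V : Set ι) : Prop :=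
  V.Nonempty ∧ ∀ u ∈ V, ∀ w ∈ V,
    Relation.ReflTransGen (fun a b => a ∈ V ∧ b ∈ V ∧ ∃ e, ends e = s(a, b)) u w

/-- `β^⋆(V) = ∑_{v ∈ V} (φ^⋆(v) - D(v)) + |E(V,V^c)|/2`. -/
noncomputable def beta (ends : Ed → Sym2 ι) (D : ι → ℤ) (φ : ι → ℝ) (V : Set ι) : ℝ :=
  (∑ᶠ v ∈ V, (φ v - (D v : ℝ))) + ((edgesBetween ends V Vᶜ).ncard : ℝ) / 2

/-- `β⁰ = (β⁺ + β⁻)/2`. -/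
noncomputable def betaZero (ends : Ed → Sym2 ι) (D : ι → ℤ) (φp φm : ι → ℝ) (V : Set ι) : ℝ :=
  (beta ends D φp V + beta ends D φm V) / 2

/-- A subset `∅ ⊊ V ⊊ ι` is extremal if `β⁺(V) > 0` and `β⁻(V) < 0`. -/
def Extremal (ends : Ed → Sym2 ι) (D : ι → ℤ) (φp φm : ι → ℝ) (V : Set ι) : Prop :=
  V.Nonempty ∧ V ≠ Set.univ ∧ 0 < beta ends D φp V ∧ beta ends D φm V < 0

/-- `ext(G,D)`: extremal subsets which are connected with connected complement. -/
def extSet (ends : Ed → Sym2 ι) (D : ι → ℤ) (φp φm : ι → ℝ) : Set (Set ι) :=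
  {V | Extremal ends D φp φm V ∧ IsConnectedOn ends V ∧ IsConnectedOn ends Vᶜ}

/-- `nex(V') = ⋂ {V ∈ V_• : V' ⊊ V}` (the empty intersection being everything). -/
def nex (Vb : Set (Set ι)) (V' : Set ι) : Set ι :=
  ⋂₀ {V | V ∈ Vb ∧ V' ⊂ V}

/-- A full forest in `ext(G,D)`. -/
def IsFullForest (ends : Ed → Sym2 ι) (D : ι → ℤ) (φp φm : ι → ℝ)
    (Vb : Set (Set ι)) : Prop :=
  Vb ⊆ extSet ends D φp φm ∧
  (∀ V ∈ Vb, IsChain (· ⊆ ·) {W | W ∈ Vb ∧ W ⊆ V}) ∧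
  (∀ V ∈ extSet ends D φp φm,
    (∀ W ∈ extSet ends D φp φm, V ⊆ W → V = W) → V ∈ Vb) ∧
  (∀ e : Ed, ∃ V ∈ Vb, e ∈ edgesBetween ends V Vᶜ)

/-- `L` is a lower subset of `ext`. -/
def IsLowerSubset (ext L : Set (Set ι)) : Prop :=
  L ⊆ ext ∧ ∀ V ∈ L, ∀ W ∈ ext, W ⊆ V → W ∈ L

/-- A vine function on a lower set `L ⊆ ext`. -/
def IsVineFunction (ends : Ed → Sym2 ι) (ext L : Set (Set ι))
    (α : Set ι → Set Ed) : Prop :=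
  (∀ V ∈ L, α V ⊆ edgesBetween ends V Vᶜ) ∧
  ∀ V ∈ L, (α V = ∅ ↔
    ∃ V' ∈ ext, V' ⊂ V ∧ (α V' ∩ edgesBetween ends V Vᶜ).Nonempty)

/-- A full vine function: a vine function with `L = ext` whose values cover all edges
(extended by `∅` outside `ext`). -/
def IsFullVine (ends : Ed → Sym2 ι) (ext : Set (Set ι)) (α : Set ι → Set Ed) : Prop :=
  IsVineFunction ends ext ext α ∧ (⋃ V ∈ ext, α V) = (Set.univ : Set Ed) ∧
  ∀ V ∉ ext, α V = ∅

/-- The vine function associated to a full forest: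
`α_{V_•}(V) = E(V, nex(V) \ V)` for `V ∈ V_•`, and `∅` otherwise. -/
def alphaOf (ends : Ed → Sym2 ι) (Vb : Set (Set ι)) (V : Set ι) : Set Ed :=
  {e | V ∈ Vb ∧ e ∈ edgesBetween ends V (nex Vb V \ V)}

/-
Intersection is extremal: `β⁰` is submodular (the cut function is), so with `β⁰ ≥ 0` and
`β⁰(V₁) = β⁰(V₂) = 0` from (C) one gets `β⁰(V₁ ∩ V₂) = 0`; by (A) every nonempty proper set
with `β⁰ = 0` is extremal, and `v₁ ∈ V₁ ∩ V₂` by (★).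
Connectivity: a separation `V₁ ∩ V₂ = C ⊔ C'` without edges between `C` and `C'` makes `β⁰`
additive, so `β⁰(C) = β⁰(C') = 0`, both parts are extremal and both contain `v₁`, which is absurd.
The complement `V₁ᶜ ∪ V₂ᶜ` is a union of two connected sets meeting in `Vᶜ ≠ ∅`.
-/

open Set Relation

section Cuts

variable {ends : Ed → Sym2 ι}

lemma mem_edgesBetween_iff_of_ends_eq {e : Ed} {x y : ι} (h : ends e = s(x, y))
    (V W : Set ι) :
    e ∈ edgesBetween ends V W ↔ (x ∈ V ∧ y ∈ W) ∨ (y ∈ V ∧ x ∈ W) := by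
  constructor
  · rintro ⟨a, b, hab, ha, hb⟩
    rw [h, Sym2.eq_iff] at hab
    rcases hab with ⟨rfl, rfl⟩ | ⟨rfl, rfl⟩
    exacts [Or.inl ⟨ha, hb⟩, Or.inr ⟨ha, hb⟩]
  · rintro (⟨hx, hy⟩ | ⟨hy, hx⟩)
    · exact ⟨x, y, h, hx, hy⟩
    · exact ⟨y, x, h.trans Sym2.eq_swap, hy, hx⟩

lemma exists_ends_eq (e : Ed) : ∃ x y, ends e = s(x, y) := by
  induction ends e using Sym2.ind with
  | _ x y => exact ⟨x, y, rfl⟩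

variable [Finite Ed]

lemma ncard_cut_inter_add_ncard_cut_union_le (A B : Set ι) :
    (edgesBetween ends (A ∩ B) (A ∩ B)ᶜ).ncard + (edgesBetween ends (A ∪ B) (A ∪ B)ᶜ).ncard
      ≤ (edgesBetween ends A Aᶜ).ncard + (edgesBetween ends B Bᶜ).ncard := by
  have hunion : edgesBetween ends (A ∩ B) (A ∩ B)ᶜ ∪ edgesBetween ends (A ∪ B) (A ∪ B)ᶜ
      ⊆ edgesBetween ends A Aᶜ ∪ edgesBetween ends B Bᶜ := by
    intro e he
    obtain ⟨x, y, hxy⟩ := exists_ends_eq (ends := ends) e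
    simp only [mem_union, mem_edgesBetween_iff_of_ends_eq hxy, mem_inter_iff,
      mem_compl_iff] at he ⊢
    tauto
  have hinter : edgesBetween ends (A ∩ B) (A ∩ B)ᶜ ∩ edgesBetween ends (A ∪ B) (A ∪ B)ᶜ
      ⊆ edgesBetween ends A Aᶜ ∩ edgesBetween ends B Bᶜ := by
    intro e he
    obtain ⟨x, y, hxy⟩ := exists_ends_eq (ends := ends) e
    simp only [mem_inter_iff, mem_edgesBetween_iff_of_ends_eq hxy, mem_union,
      mem_compl_iff] at he ⊢
    tauto
  rw [← ncard_union_add_ncard_inter, ← ncard_union_add_ncard_inter (edgesBetween ends A Aᶜ)]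
  exact add_le_add (ncard_le_ncard hunion) (ncard_le_ncard hinter)

lemma ncard_cut_union_of_edgesBetween_eq_empty {A B : Set ι} (hd : Disjoint A B)
    (he : edgesBetween ends A B = ∅) :
    (edgesBetween ends (A ∪ B) (A ∪ B)ᶜ).ncard
      = (edgesBetween ends A Aᶜ).ncard + (edgesBetween ends B Bᶜ).ncard := by
  have hsep : ∀ e, ∀ x y, ends e = s(x, y) → ¬ ((x ∈ A ∧ y ∈ B) ∨ (y ∈ A ∧ x ∈ B)) :=
    fun e x y hxy h => (he ▸ (mem_edgesBetween_iff_of_ends_eq hxy A B).2 h : e ∈ (∅ : Set Ed))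
  have hdisj : ∀ x, x ∈ A → x ∉ B := fun x hA hB => hd.ne_of_mem hA hB rfl
  have hcut : edgesBetween ends (A ∪ B) (A ∪ B)ᶜ
      = edgesBetween ends A Aᶜ ∪ edgesBetween ends B Bᶜ := by
    ext e
    obtain ⟨x, y, hxy⟩ := exists_ends_eq (ends := ends) e
    have := hsep e x y hxy
    have := hdisj x
    have := hdisj y
    simp only [mem_union, mem_edgesBetween_iff_of_ends_eq hxy, mem_compl_iff]
    tauto
  have hcuts : Disjoint (edgesBetween ends A Aᶜ) (edgesBetween ends B Bᶜ) := by
    refine disjoint_left.2 fun e heA heB => ?_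
    obtain ⟨x, y, hxy⟩ := exists_ends_eq (ends := ends) e
    have := hsep e x y hxy
    have := hdisj x
    have := hdisj y
    rw [mem_edgesBetween_iff_of_ends_eq hxy, mem_compl_iff, mem_compl_iff] at heA heB
    tauto
  rw [hcut, ncard_union_eq hcuts]

end Cuts

section Beta

variable [Finite ι] [Finite Ed] {ends : Ed → Sym2 ι} {D : ι → ℤ}

lemma beta_inter_add_beta_union_le (φ : ι → ℝ) (A B : Set ι) :
    beta ends D φ (A ∩ B) + beta ends D φ (A ∪ B) ≤ beta ends D φ A + beta ends D φ B := by
  have hsum := finsum_mem_union_inter (f := fun v => φ v - (D v : ℝ)) (toFinite A) (toFinite B)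
  have hcut : ((edgesBetween ends (A ∩ B) (A ∩ B)ᶜ).ncard : ℝ)
      + (edgesBetween ends (A ∪ B) (A ∪ B)ᶜ).ncard
      ≤ (edgesBetween ends A Aᶜ).ncard + (edgesBetween ends B Bᶜ).ncard := by
    exact_mod_cast ncard_cut_inter_add_ncard_cut_union_le A B
  unfold beta
  linarith

lemma beta_union_of_edgesBetween_eq_empty (φ : ι → ℝ) {A B : Set ι} (hd : Disjoint A B)
    (he : edgesBetween ends A B = ∅) :
    beta ends D φ (A ∪ B) = beta ends D φ A + beta ends D φ B := by
  unfold beta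
  rw [ncard_cut_union_of_edgesBetween_eq_empty hd he,
    finsum_mem_union hd (toFinite A) (toFinite B)]
  push_cast
  ring

variable {φp φm : ι → ℝ}

lemma betaZero_inter_eq_zero (hB : ∀ V : Set ι, 0 ≤ betaZero ends D φp φm V) {A B : Set ι}
    (hA0 : betaZero ends D φp φm A = 0) (hB0 : betaZero ends D φp φm B = 0) :
    betaZero ends D φp φm (A ∩ B) = 0 := by
  have hp := beta_inter_add_beta_union_le (ends := ends) (D := D) φp A B
  have hm := beta_inter_add_beta_union_le (ends := ends) (D := D) φm A B
  have hI := hB (A ∩ B)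
  have hU := hB (A ∪ B)
  unfold betaZero at *
  linarith

lemma betaZero_eq_zero_of_union (hB : ∀ V : Set ι, 0 ≤ betaZero ends D φp φm V)
    {A B : Set ι} (hd : Disjoint A B) (he : edgesBetween ends A B = ∅)
    (h0 : betaZero ends D φp φm (A ∪ B) = 0) :
    betaZero ends D φp φm A = 0 ∧ betaZero ends D φp φm B = 0 := by
  have hp := beta_union_of_edgesBetween_eq_empty (D := D) φp hd he
  have hm := beta_union_of_edgesBetween_eq_empty (D := D) φm hd he
  have hA := hB A
  have hB := hB B
  unfold betaZero at *
  constructor <;> linarith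

end Beta

lemma extremal_of_betaZero_eq_zero {ends : Ed → Sym2 ι} {D : ι → ℤ} {φp φm : ι → ℝ}
    (hA : ∀ V : Set ι, V.Nonempty → V ≠ univ → 0 < beta ends D φp V) {W : Set ι}
    (hne : W.Nonempty) (hnu : W ≠ univ) (h0 : betaZero ends D φp φm W = 0) :
    Extremal ends D φp φm W := by
  have hp := hA W hne hnu
  unfold betaZero at h0
  exact ⟨hne, hnu, hp, by linarith⟩

section Connected

variable {ends : Ed → Sym2 ι}

lemma reflTransGen_induced_mono {V W : Set ι} (h : V ⊆ W) {u w : ι}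
    (huw : ReflTransGen (fun a b => a ∈ V ∧ b ∈ V ∧ ∃ e, ends e = s(a, b)) u w) :
    ReflTransGen (fun a b => a ∈ W ∧ b ∈ W ∧ ∃ e, ends e = s(a, b)) u w :=
  huw.mono (fun _ _ ⟨ha, hb, he⟩ => ⟨h ha, h hb, he⟩) _ _

lemma isConnectedOn_union {A B : Set ι} (hA : IsConnectedOn ends A)
    (hB : IsConnectedOn ends B) (hAB : (A ∩ B).Nonempty) :
    IsConnectedOn ends (A ∪ B) := by
  obtain ⟨z, hzA, hzB⟩ := hAB
  have to_z : ∀ u ∈ A ∪ B,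
      ReflTransGen (fun a b => a ∈ A ∪ B ∧ b ∈ A ∪ B ∧ ∃ e, ends e = s(a, b)) u z := by
    rintro u (hu | hu)
    exacts [reflTransGen_induced_mono subset_union_left (hA.2 u hu z hzA),
      reflTransGen_induced_mono subset_union_right (hB.2 u hu z hzB)]
  have from_z : ∀ w ∈ A ∪ B,
      ReflTransGen (fun a b => a ∈ A ∪ B ∧ b ∈ A ∪ B ∧ ∃ e, ends e = s(a, b)) z w := by
    rintro w (hw | hw)
    exacts [reflTransGen_induced_mono subset_union_left (hA.2 z hzA w hw),
      reflTransGen_induced_mono subset_union_right (hB.2 z hzB w hw)]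
  exact ⟨⟨z, Or.inl hzA⟩, fun u hu w hw => (to_z u hu).trans (from_z w hw)⟩

lemma isConnectedOn_of_forall_edgesBetween_nonempty {V : Set ι} (hne : V.Nonempty)
    (hsep : ∀ C ⊆ V, C.Nonempty → (V \ C).Nonempty → (edgesBetween ends C (V \ C)).Nonempty) :
    IsConnectedOn ends V := by
  refine ⟨hne, fun u hu w hw => ?_⟩
  set R := fun a b => a ∈ V ∧ b ∈ V ∧ ∃ e, ends e = s(a, b)
  let C := {x | x ∈ V ∧ ReflTransGen R u x}
  by_contra hw'
  obtain ⟨e, a, b, hab, ⟨haV, hua⟩, hbV, hbC⟩ :=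
    hsep C (fun _ hx => hx.1) ⟨u, hu, .refl⟩ ⟨w, hw, fun h => hw' h.2⟩
  exact hbC ⟨hbV, hua.tail ⟨haV, hbV, e, hab⟩⟩

end Connected

lemma isConnectedOn_of_betaZero_eq_zero [Finite ι] [Finite Ed] {ends : Ed → Sym2 ι}
    {D : ι → ℤ} {φp φm : ι → ℝ}
    (hA : ∀ V : Set ι, V.Nonempty → V ≠ univ → 0 < beta ends D φp V)
    (hB : ∀ V : Set ι, 0 ≤ betaZero ends D φp φm V)
    {v₁ : ι} (hstar : ∀ V : Set ι, Extremal ends D φp φm V → v₁ ∈ V)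
    {W : Set ι} (hne : W.Nonempty) (hnu : W ≠ univ) (h0 : betaZero ends D φp φm W = 0) :
    IsConnectedOn ends W := by
  refine isConnectedOn_of_forall_edgesBetween_nonempty hne fun C hCW hC hC' => ?_
  by_contra! he
  have hd : Disjoint C (W \ C) := disjoint_sdiff_right
  obtain ⟨h0C, h0C'⟩ := betaZero_eq_zero_of_union hB hd he (by rwa [union_sdiff_cancel hCW])
  have hv₁C := hstar C (extremal_of_betaZero_eq_zero hA hC (ne_top_of_le_ne_top hnu hCW) h0C)
  have hv₁C' := hstar _
    (extremal_of_betaZero_eq_zero hA hC' (ne_top_of_le_ne_top hnu sdiff_subset) h0C')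
  exact hv₁C'.2 hv₁C

theorem inter_mem_ext_general {ι Ed : Type*} [Fintype ι] [Fintype Ed]
    (ends : Ed → Sym2 ι) (D : ι → ℤ) (φp φm : ι → ℝ)
    (hA : ∀ V : Set ι, V.Nonempty → V ≠ Set.univ → 0 < beta ends D φp V)
    (hB : ∀ V : Set ι, 0 ≤ betaZero ends D φp φm V)
    (hC : ∀ V : Set ι, beta ends D φm V < 0 → betaZero ends D φp φm V = 0)
    (v₁ : ι) (hstar : ∀ V : Set ι, Extremal ends D φp φm V → v₁ ∈ V)
    (V₁ V₂ V : Set ι)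
    (h₁ : V₁ ∈ extSet ends D φp φm) (h₂ : V₂ ∈ extSet ends D φp φm)
    (hV : V ∈ extSet ends D φp φm) (hs₁ : V₁ ⊆ V) (hs₂ : V₂ ⊆ V) :
    V₁ ∩ V₂ ∈ extSet ends D φp φm := by
  obtain ⟨hex₁, -, hc₁⟩ := h₁
  obtain ⟨hex₂, -, hc₂⟩ := h₂
  have h0 : betaZero ends D φp φm (V₁ ∩ V₂) = 0 :=
    betaZero_inter_eq_zero hB (hC V₁ hex₁.2.2.2) (hC V₂ hex₂.2.2.2)
  have hne : (V₁ ∩ V₂).Nonempty := ⟨v₁, hstar V₁ hex₁, hstar V₂ hex₂⟩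
  have hnu : V₁ ∩ V₂ ≠ univ := ne_top_of_le_ne_top hex₁.2.1 inter_subset_left
  have hcompl : IsConnectedOn ends (V₁ ∩ V₂)ᶜ := by
    obtain ⟨z, hz⟩ := hV.2.2.1
    rw [compl_inter]
    exact isConnectedOn_union hc₁ hc₂ ⟨z, fun h => hz (hs₁ h), fun h => hz (hs₂ h)⟩
  exact ⟨extremal_of_betaZero_eq_zero hA hne hnu h0,
    isConnectedOn_of_betaZero_eq_zero hA hB hstar hne hnu h0, hcompl⟩

/-- Corollary: if `V₁, V₂ ∈ ext(G,D)` are both contained in some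
`V ∈ ext(G,D)`, then `V₁ ∩ V₂ ∈ ext(G,D)`. -/
theorem inter_mem_ext {ι Ed : Type*} [Fintype ι] [Fintype Ed]
    (ends : Ed → Sym2 ι) (D : ι → ℤ) (φp φm : ι → ℝ)
    (hconn : IsConnectedOn ends (Set.univ : Set ι))
    (hA : ∀ V : Set ι, V.Nonempty → V ≠ Set.univ → 0 < beta ends D φp V)
    (hB : ∀ V : Set ι, 0 ≤ betaZero ends D φp φm V)
    (hC : ∀ V : Set ι, beta ends D φm V < 0 → betaZero ends D φp φm V = 0)
    (v₁ : ι) (hstar : ∀ V : Set ι, Extremal ends D φp φm V → v₁ ∈ V)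
    (V₁ V₂ V : Set ι)
    (h₁ : V₁ ∈ extSet ends D φp φm) (h₂ : V₂ ∈ extSet ends D φp φm)
    (hV : V ∈ extSet ends D φp φm) (hs₁ : V₁ ⊆ V) (hs₂ : V₂ ⊆ V) :
    V₁ ∩ V₂ ∈ extSet ends D φp φm :=
  inter_mem_ext_general ends D φp φm hA hB hC v₁ hstar V₁ V₂ V h₁ h₂ hV hs₁ hs₂

end Paper
end

section
/- Let S ⊆ P be a chain. Then the sum, over all nonempty chains ℓ ⊆ P with S ⊆ ℓ, of (−1)^{|S|+|ℓ|}·x(max ℓ), equals: (i) −∑_{V minimal in P} x(V), if S = ∅; (ii) 0, if there exists V ∈ P \ S with V < max(S) such that S ∪ {V} is a chain; (iii) x(max S) − ∑_{V covering max S in P} x(V), otherwise (S nonempty). -/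
/-!
In a forest every subset of `Iic m` is a chain, so the chains containing `S` with top element `m`
are exactly the sets in the Boolean interval `[insert m S, Iic m]`. The alternating sum over a
Boolean interval vanishes unless the interval is a single point, so only the `m` with
`Iic m = insert m S` contribute, each with sign `+1` if `m ∈ S` and `-1` otherwise. For `S = ∅`
these `m` are the minimal elements; if `S` can be extended below its maximum there are none;
otherwise `Iic (max S) = S`, and they are `max S` together with its covers.
-/

open Finset

theorem Finset.sum_Icc_neg_one_pow_card {R α : Type*} [CommRing R] [DecidableEq α]
    (A D : Finset α) :
    ∑ ℓ ∈ Icc A D, (-1 : R) ^ #ℓ = if A = D then (-1) ^ #A else 0 := by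
  by_cases hAD : A ⊆ D
  · have hunion : ∀ t ∈ (D \ A).powerset, (-1 : R) ^ #(A ∪ t) = (-1) ^ #A * (-1) ^ #t :=
      fun t ht ↦ by
        rw [card_union_of_disjoint (disjoint_sdiff.mono_right (mem_powerset.1 ht)), pow_add]
    have hpowerset : ∑ t ∈ (D \ A).powerset, (-1 : R) ^ #t = if D \ A = ∅ then 1 else 0 := by
      simpa using congrArg (Int.cast : ℤ → R) (sum_powerset_neg_one_pow_card (x := D \ A))
    have hinj : Set.InjOn (A ∪ ·) ((D \ A).powerset : Set (Finset α)) := fun s hs t ht hst ↦ by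
      simp only [coe_powerset, Set.mem_preimage, Set.mem_powerset_iff, coe_subset] at hs ht
      have := congrArg (· \ A) hst
      simpa only [union_sdiff_cancel_left (disjoint_sdiff.mono_right hs),
        union_sdiff_cancel_left (disjoint_sdiff.mono_right ht)] using this
    have hempty : D \ A = ∅ ↔ A = D :=
      sdiff_eq_empty_iff_subset.trans ⟨hAD.antisymm, fun h ↦ h.ge⟩
    rw [Icc_eq_image_powerset hAD, sum_image hinj, sum_congr rfl hunion, ← mul_sum, hpowerset]
    simp only [hempty, mul_ite, mul_one, mul_zero]
  · rw [Icc_eq_empty hAD, if_neg (fun h ↦ hAD h.le), sum_empty]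

theorem neg_one_pow_card_add_card_insert {R α : Type*} [CommRing R] [DecidableEq α]
    (S : Finset α) (a : α) :
    (-1 : R) ^ (#S + #(insert a S)) = if a ∈ S then 1 else -1 := by
  split_ifs with ha
  · rw [insert_eq_of_mem ha, ← two_mul, pow_mul, neg_one_sq, one_pow]
  · rw [card_insert_of_notMem ha, ← add_assoc, ← two_mul, pow_succ, pow_mul, neg_one_sq, one_pow,
      one_mul]

theorem finsum_mem_setOf_eq_sum_ite {α M : Type*} [Fintype α] [AddCommMonoid M]
    (p : α → Prop) [DecidablePred p] (f : α → M) :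
    ∑ᶠ a ∈ {a | p a}, f a = ∑ a, if p a then f a else 0 := by
  rw [finsum_mem_def, finsum_eq_sum_of_fintype]
  simp [Set.indicator_apply]

theorem Set.Iic_eq_singleton_iff {α : Type*} [PartialOrder α] {a : α} :
    Set.Iic a = {a} ↔ IsMin a :=
  ⟨fun h b hb ↦ (Set.mem_singleton_iff.1 (h ▸ hb : b ∈ ({a} : Set α))).ge, IsMin.Iic_eq⟩

section Forest

variable {P : Type*} [PartialOrder P]

theorem setOf_Iic_eq_insert_eq_empty {S : Set P} {m V : P} (hm : m ∈ S) (hV : V ∉ S)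
    (hVm : V < m) : {a | Set.Iic a = insert a S} = ∅ := by
  refine Set.eq_empty_of_forall_notMem fun a (ha : Set.Iic a = insert a S) ↦ ?_
  have hma : m ≤ a := (ha ▸ Set.mem_insert_of_mem a hm : m ∈ Set.Iic a)
  have hVa : V ∈ insert a S := ha ▸ (hVm.trans_le hma).le
  exact hV (hVa.resolve_left (hVm.trans_le hma).ne)

variable (hforest : ∀ a : P, IsChain (· ≤ ·) {b : P | b ≤ a})
include hforest

theorem Iic_eq_of_not_exists_lt_isChain_insert {S : Set P} {m : P} (hm : m ∈ S)
    (hmax : ∀ b ∈ S, b ≤ m)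
    (hno : ¬ ∃ V : P, V ∉ S ∧ V < m ∧ IsChain (· ≤ ·) (insert V S)) :
    Set.Iic m = S := by
  refine Set.Subset.antisymm (fun b hb ↦ ?_) hmax
  by_contra hbS
  have hchain : IsChain (· ≤ ·) (insert b S) :=
    (hforest m).mono (Set.insert_subset hb hmax)
  exact hno ⟨b, hbS, hb.lt_of_ne (fun h ↦ hbS (h ▸ hm)), hchain⟩

theorem Iic_eq_insert_Iic_iff {m a : P} :
    Set.Iic a = insert a (Set.Iic m) ↔ a = m ∨ m ⋖ a := by
  constructor
  · intro ha
    have hma : m ≤ a := (ha ▸ Set.mem_insert_of_mem a le_rfl : m ∈ Set.Iic a)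
    refine hma.eq_or_lt.imp Eq.symm fun hlt ↦ ⟨hlt, fun c hmc hca ↦ ?_⟩
    rcases (ha ▸ hca.le : c ∈ insert a (Set.Iic m)) with rfl | hcm
    · exact hca.false
    · exact hmc.not_ge hcm
  · rintro (rfl | hcov)
    · exact (Set.insert_eq_of_mem (Set.mem_Iic.2 le_rfl)).symm
    · refine Set.Subset.antisymm (fun b (hba : b ≤ a) ↦ ?_)
        (Set.insert_subset le_rfl fun b hbm ↦ hbm.trans hcov.le)
      rcases hba.eq_or_lt with rfl | hba
      · exact Set.mem_insert b _
      rcases eq_or_ne b m with rfl | hbm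
      · exact Set.mem_insert_of_mem a le_rfl
      refine Set.mem_insert_of_mem a ((hforest a hba.le hcov.le hbm).resolve_right fun hmb ↦ ?_)
      exact hcov.2 (hmb.lt_of_ne hbm.symm) hba

theorem isChain_with_top_iff_mem_Icc [Fintype P] [DecidableEq P] [DecidableLE P]
    (S ℓ : Finset P) (m : P) :
    (IsChain (· ≤ ·) (ℓ : Set P) ∧ S ⊆ ℓ ∧ m ∈ ℓ ∧ ∀ b ∈ ℓ, b ≤ m) ↔
      ℓ ∈ Finset.Icc (insert m S) (Set.Iic m).toFinset := by
  rw [Finset.mem_Icc, Finset.insert_subset_iff]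
  simp only [Finset.subset_iff, Set.mem_toFinset, Set.mem_Iic]
  exact ⟨fun ⟨_, hS, hm, hle⟩ ↦ ⟨⟨hm, hS⟩, hle⟩,
    fun ⟨⟨hm, hS⟩, hle⟩ ↦ ⟨(hforest m).mono hle, hS, hm, hle⟩⟩

theorem finsum_chains_superset_eq [Fintype P] [DecidableEq P] {R : Type*} [CommRing R]
    (x : P → R) (S : Finset P) :
    ∑ᶠ p ∈ {p : Finset P × P | IsChain (· ≤ ·) (p.1 : Set P) ∧ S ⊆ p.1 ∧ p.2 ∈ p.1 ∧
        ∀ b ∈ p.1, b ≤ p.2}, (-1 : R) ^ (#S + #p.1) * x p.2 =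
      ∑ᶠ m ∈ {m | Set.Iic m = insert m (S : Set P)}, if m ∈ S then x m else -x m := by
  classical
  rw [finsum_mem_setOf_eq_sum_ite, finsum_mem_setOf_eq_sum_ite, Fintype.sum_prod_type,
    Finset.sum_comm]
  refine Finset.sum_congr rfl fun m _ ↦ ?_
  have hfiber : ({ℓ | IsChain (· ≤ ·) (ℓ : Set P) ∧ S ⊆ ℓ ∧ m ∈ ℓ ∧ ∀ b ∈ ℓ, b ≤ m} :
      Finset (Finset P)) = Icc (insert m S) (Set.Iic m).toFinset := by
    ext ℓ
    simp only [Finset.mem_filter, Finset.mem_univ, true_and,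
      isChain_with_top_iff_mem_Icc hforest]
  have htop : insert m S = (Set.Iic m).toFinset ↔ Set.Iic m = insert m (S : Set P) := by
    rw [← Finset.coe_inj, Finset.coe_insert, Set.coe_toFinset, eq_comm]
  calc ∑ ℓ : Finset P, (if IsChain (· ≤ ·) (ℓ : Set P) ∧ S ⊆ ℓ ∧ m ∈ ℓ ∧ ∀ b ∈ ℓ, b ≤ m
          then (-1 : R) ^ (#S + #ℓ) * x m else 0)
      = (-1) ^ #S * x m * ∑ ℓ ∈ Icc (insert m S) (Set.Iic m).toFinset, (-1 : R) ^ #ℓ := by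
        rw [← Finset.sum_filter, hfiber, mul_sum]
        exact sum_congr rfl fun ℓ _ ↦ by ring
    _ = _ := by
        rw [sum_Icc_neg_one_pow_card]
        simp only [htop]
        split_ifs
        · rw [mul_right_comm, ← pow_add, neg_one_pow_card_add_card_insert, if_pos ‹_›, one_mul]
        · rw [mul_right_comm, ← pow_add, neg_one_pow_card_add_card_insert, if_neg ‹_›,
            neg_one_mul]
        · rw [mul_zero]

end Forest

theorem sum_over_chains_in_forest_general {P : Type*} [Fintype P] [PartialOrder P]
    {R : Type*} [CommRing R]
    (hforest : ∀ a : P, IsChain (· ≤ ·) {b : P | b ≤ a})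
    (x : P → R) (S : Finset P) :
    (S = ∅ →
      (∑ᶠ p ∈ {p : Finset P × P | IsChain (· ≤ ·) ((p.1 : Set P)) ∧ S ⊆ p.1 ∧
          p.2 ∈ p.1 ∧ ∀ b ∈ p.1, b ≤ p.2},
        ((-1 : R) ^ (S.card + p.1.card) * x p.2)) =
      -(∑ᶠ v ∈ {v : P | IsMin v}, x v)) ∧
    (∀ m ∈ S, (∀ b ∈ S, b ≤ m) →
      ((∃ V : P, V ∉ S ∧ V < m ∧ IsChain (· ≤ ·) (insert V (S : Set P))) →
        (∑ᶠ p ∈ {p : Finset P × P | IsChain (· ≤ ·) ((p.1 : Set P)) ∧ S ⊆ p.1 ∧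
            p.2 ∈ p.1 ∧ ∀ b ∈ p.1, b ≤ p.2},
          ((-1 : R) ^ (S.card + p.1.card) * x p.2)) = 0) ∧
      ((¬ ∃ V : P, V ∉ S ∧ V < m ∧ IsChain (· ≤ ·) (insert V (S : Set P))) →
        (∑ᶠ p ∈ {p : Finset P × P | IsChain (· ≤ ·) ((p.1 : Set P)) ∧ S ⊆ p.1 ∧
            p.2 ∈ p.1 ∧ ∀ b ∈ p.1, b ≤ p.2},
          ((-1 : R) ^ (S.card + p.1.card) * x p.2)) =
        x m - ∑ᶠ V ∈ {V : P | m ⋖ V}, x V)) := by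
  classical
  rw [finsum_chains_superset_eq hforest]
  refine ⟨fun hS ↦ ?_, fun m hm hmax ↦ ⟨fun ⟨V, hVS, hVm, _⟩ ↦ ?_, fun hno ↦ ?_⟩⟩
  · subst hS
    simp only [Finset.coe_empty, insert_empty_eq, Set.Iic_eq_singleton_iff, Finset.notMem_empty,
      if_false]
    exact finsum_mem_neg_distrib x (Set.toFinite _)
  · rw [setOf_Iic_eq_insert_eq_empty hm hVS hVm, finsum_mem_empty]
  · have hIic : Set.Iic m = S := Iic_eq_of_not_exists_lt_isChain_insert hforest hm hmax hno
    have hcovers : {a | Set.Iic a = insert a (S : Set P)} = insert m {a | m ⋖ a} :=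
      Set.ext fun a ↦ hIic ▸ Iic_eq_insert_Iic_iff hforest
    have hnotMem : ∀ a ∈ {a | m ⋖ a}, a ∉ S := fun a hma haS ↦ (hmax a haS).not_gt hma.lt
    rw [hcovers, finsum_mem_insert _ (fun h ↦ h.lt.false) (Set.toFinite _), if_pos hm,
      finsum_mem_congr rfl fun a ha ↦ if_neg (hnotMem a ha),
      finsum_mem_neg_distrib _ (Set.toFinite _), sub_eq_add_neg]

/-- Lemma (sum over chains in a forest poset). Let `P` be a finite poset which
is a forest (every lower set `{b : b ≤ a}` is a chain), `R` a commutative ring,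
`x : P → R`, and `S ⊆ P` a chain. The sum over all nonempty chains `ℓ` with
`S ⊆ ℓ` of `(−1)^{|S|+|ℓ|}·x(max ℓ)` (encoded as a sum over pairs `(ℓ, m)`
with `m` the top element of the chain `ℓ`) equals:
`−∑_{V minimal} x(V)` if `S = ∅`; `0` if some `V ∉ S` with `V < max S` keeps
`S ∪ {V}` a chain; and `x(max S) − ∑_{V ⋗ max S} x(V)` otherwise. -/
theorem sum_over_chains_in_forest {P : Type*} [Fintype P] [PartialOrder P]
    {R : Type*} [CommRing R]
    (hforest : ∀ a : P, IsChain (· ≤ ·) {b : P | b ≤ a})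
    (x : P → R) (S : Finset P) (hS : IsChain (· ≤ ·) (S : Set P)) :
    (S = ∅ →
      (∑ᶠ p ∈ {p : Finset P × P | IsChain (· ≤ ·) ((p.1 : Set P)) ∧ S ⊆ p.1 ∧
          p.2 ∈ p.1 ∧ ∀ b ∈ p.1, b ≤ p.2},
        ((-1 : R) ^ (S.card + p.1.card) * x p.2)) =
      -(∑ᶠ v ∈ {v : P | IsMin v}, x v)) ∧
    (∀ m ∈ S, (∀ b ∈ S, b ≤ m) →
      ((∃ V : P, V ∉ S ∧ V < m ∧ IsChain (· ≤ ·) (insert V (S : Set P))) →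
        (∑ᶠ p ∈ {p : Finset P × P | IsChain (· ≤ ·) ((p.1 : Set P)) ∧ S ⊆ p.1 ∧
            p.2 ∈ p.1 ∧ ∀ b ∈ p.1, b ≤ p.2},
          ((-1 : R) ^ (S.card + p.1.card) * x p.2)) = 0) ∧
      ((¬ ∃ V : P, V ∉ S ∧ V < m ∧ IsChain (· ≤ ·) (insert V (S : Set P))) →
        (∑ᶠ p ∈ {p : Finset P × P | IsChain (· ≤ ·) ((p.1 : Set P)) ∧ S ⊆ p.1 ∧
            p.2 ∈ p.1 ∧ ∀ b ∈ p.1, b ≤ p.2},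
          ((-1 : R) ^ (S.card + p.1.card) * x p.2)) =
        x m - ∑ᶠ V ∈ {V : P | m ⋖ V}, x V)) :=
  sum_over_chains_in_forest_general hforest x S
end
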